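/- arXiv:2110.10025 — 2 statements merged into one kernel-verified Lean document; each statement's English description precedes it below -/
import Mathlib

section
/- For any finite p-group G, the following inequality holds: |G| / |Soc(G) : Soc(G) ∩ Frat(G)| ≤ |G : Z(G)Frat(G)| · |Frat(G)|^2. -/
/-- The socle of a `p`-group: the subgroup generated by central elements of order dividing `p`. -/
def socle (p : ℕ) (G : Type*) [Group G] : Subgroup G :=
  Subgroup.closure {g : G | g ∈ Subgroup.center G ∧ g ^ p = 1}

lemma pow_mem_frattini {p : ℕ} [Fact p.Prime] {G : Type*} [Group G] [Finite G]
    (hG : IsPGroup p G) (x : G) : x ^ p ∈ frattini G := by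
  have hnil : Group.IsNilpotent G := hG.isNilpotent
  have key : ∀ M : Subgroup G, IsCoatom M → x ^ p ∈ M := by
    intro M hM
    have hMn : M.Normal := Subgroup.NormalizerCondition.normal_of_coatom M normalizerCondition_of_isNilpotent hM
    have hQ : IsPGroup p (G ⧸ M) := hG.to_quotient M
    have hdich : ∀ K : Subgroup (G ⧸ M), K = ⊥ ∨ K = ⊤ := by
      intro K
      have hker : M ≤ K.comap (QuotientGroup.mk' M) := by
        intro m hm
        have h1 : QuotientGroup.mk' M m = 1 := (QuotientGroup.eq_one_iff m).2 hm
        rw [Subgroup.mem_comap, h1]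
        exact K.one_mem
      rcases hker.lt_or_eq with hlt | heq
      · right
        have htop : K.comap (QuotientGroup.mk' M) = ⊤ := hM.2 _ hlt
        rw [eq_top_iff]
        intro q _
        obtain ⟨g, rfl⟩ := QuotientGroup.mk'_surjective M q
        have : g ∈ K.comap (QuotientGroup.mk' M) := htop ▸ Subgroup.mem_top g
        exact this
      · left
        rw [Subgroup.eq_bot_iff_forall]
        intro q hq
        obtain ⟨g, rfl⟩ := QuotientGroup.mk'_surjective M q
        have hg : g ∈ M := heq ▸ (Subgroup.mem_comap.2 hq)
        exact (QuotientGroup.eq_one_iff g).2 hg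
    set y : G ⧸ M := QuotientGroup.mk' M x with hy
    have hyp : y ^ p = 1 := by
      by_contra hne
      have hy1 : y ≠ 1 := fun h => hne (by rw [h, one_pow])
      have h2 : Subgroup.zpowers (y ^ p) = ⊤ :=
        (hdich _).resolve_left ((Subgroup.zpowers_ne_bot).2 hne)
      have ho2 : orderOf (y ^ p) = Nat.card (G ⧸ M) :=
        orderOf_eq_card_of_forall_mem_zpowers (fun g => h2 ▸ Subgroup.mem_top g)
      have h1 : Subgroup.zpowers y = ⊤ :=
        (hdich _).resolve_left ((Subgroup.zpowers_ne_bot).2 hy1)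
      have ho1 : orderOf y = Nat.card (G ⧸ M) :=
        orderOf_eq_card_of_forall_mem_zpowers (fun g => h1 ▸ Subgroup.mem_top g)
      have hpdvd : p ∣ orderOf y := by
        obtain ⟨k, hk⟩ := hQ y
        obtain ⟨m, hm, hmo⟩ := (Nat.dvd_prime_pow Fact.out).1 (orderOf_dvd_of_pow_eq_one hk)
        have hm1 : m ≠ 0 := by
          rintro rfl
          exact hy1 (orderOf_eq_one_iff.1 (by simpa using hmo))
        rw [hmo]
        exact dvd_pow_self p hm1
      have hop : orderOf (y ^ p) = orderOf y / p := by
        rw [orderOf_pow, Nat.gcd_eq_right hpdvd]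
      have hpos : 0 < orderOf y := orderOf_pos y
      have : orderOf y / p < orderOf y :=
        Nat.div_lt_self hpos (Fact.out : p.Prime).one_lt
      omega
    have : QuotientGroup.mk' M (x ^ p) = 1 := by rw [map_pow]; exact hyp
    exact (QuotientGroup.eq_one_iff _).1 this
  rw [frattini, Order.radical]
  simp only [Subgroup.mem_iInf]
  exact key

theorem socle_index_general_bound
    (p : ℕ) [Fact p.Prime] (G : Type*) [Group G] [Finite G] (hG : IsPGroup p G) :
    Nat.card G / (Nat.card ↥(socle p G) / Nat.card ↥(socle p G ⊓ frattini G)) ≤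
      (Subgroup.center G ⊔ frattini G).index * Nat.card ↥(frattini G) ^ 2 := by
  set Z := Subgroup.center G with hZdef
  set F := frattini G with hFdef
  set S := socle p G with hSdef
  have hcomm : ∀ z w : Z, Commute (z : G) (w : G) := fun z w =>
    (Subgroup.mem_center_iff.1 z.2 (w : G)).symm
  let ψ : Z →* G :=
    { toFun := fun z => (z : G) ^ p
      map_one' := by simp
      map_mul' := fun z w => by
        push_cast
        exact (hcomm z w).mul_pow p }
  -- S is the image of the kernel of ψ
  have hS : S = ψ.ker.map Z.subtype := by
    have hset : {g : G | g ∈ Z ∧ g ^ p = 1} = (ψ.ker.map Z.subtype : Set G) := by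
      ext g
      constructor
      · rintro ⟨hgZ, hgp⟩
        exact ⟨⟨g, hgZ⟩, by simpa [MonoidHom.mem_ker, ψ] using hgp, rfl⟩
      · rintro ⟨z, hz, rfl⟩
        exact ⟨z.2, by simpa [MonoidHom.mem_ker, ψ] using hz⟩
    rw [hSdef, socle, ← hZdef, hset, Subgroup.closure_eq]
  have hcardS : Nat.card S = Nat.card ψ.ker := by
    rw [hS]
    exact (Nat.card_congr
      (Subgroup.equivMapOfInjective ψ.ker Z.subtype Z.subtype_injective).toEquiv).symm
  have hZcard : Nat.card Z = Nat.card ψ.range * Nat.card ψ.ker := by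
    rw [Subgroup.card_eq_card_quotient_mul_card_subgroup ψ.ker]
    congr 1
    exact Nat.card_congr (QuotientGroup.quotientKerEquivRange ψ).toEquiv
  have hrF : ψ.range ≤ F := by
    rintro _ ⟨z, rfl⟩
    exact pow_mem_frattini hG (z : G)
  have hrcard : Nat.card ψ.range ≤ Nat.card F := Subgroup.card_le_of_le hrF
  -- abbreviations
  set s := Nat.card S with hs
  set d := Nat.card ↥(S ⊓ F) with hd
  set f := Nat.card F with hf
  set i := (Z ⊔ F).index with hi
  set a := F.relIndex Z with ha
  -- index decomposition of |G|
  have h1 : F.relIndex (Z ⊔ F) = a := Subgroup.relIndex_sup_right Z F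
  have h2 : F.relIndex (Z ⊔ F) * (Z ⊔ F).index = F.index :=
    Subgroup.relIndex_mul_index le_sup_right
  have h3 : F.index * f = Nat.card G := Subgroup.index_mul_card F
  have hGcard : Nat.card G = a * (i * f) := by
    rw [← h3, ← h2, h1]; ring
  -- |Z| = a * c where c = card (F ⊓ Z)
  set c := Nat.card ↥(F.subgroupOf Z) with hc
  have h4 : a * c = Nat.card Z := Subgroup.index_mul_card (F.subgroupOf Z)
  have hcc : c = Nat.card ↥(F ⊓ Z) := by
    rw [hc, ← Subgroup.inf_subgroupOf_right F Z]
    exact Nat.card_congr (Subgroup.subgroupOfEquivOfLe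
      (inf_le_right : F ⊓ Z ≤ Z)).toEquiv
  have hSZ : S ≤ Z := by
    rw [hSdef, socle, ← hZdef]
    exact (Subgroup.closure_le Z).2 (fun g hg => hg.1)
  have hdc : d ≤ c := by
    rw [hcc]
    exact Subgroup.card_le_of_le (le_inf (inf_le_right) (inf_le_left.trans hSZ))
  have hdvd : d ∣ s := Subgroup.card_dvd_of_le inf_le_left
  have hd0 : 0 < d := Nat.card_pos
  have hs0 : 0 < s := Nat.card_pos
  have hkd : s / d * d = s := Nat.div_mul_cancel hdvd
  -- key inequality : a ≤ (s/d) * f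
  have hzsf : Nat.card Z ≤ s * f := by
    rw [hZcard, hcardS, mul_comm]
    exact Nat.mul_le_mul_left _ hrcard
  have hkey : a ≤ s / d * f := by
    have hstep : a * d ≤ s / d * f * d := by
      calc a * d ≤ a * c := Nat.mul_le_mul_left _ hdc
        _ = Nat.card Z := h4
        _ ≤ s * f := hzsf
        _ = s / d * f * d := by
            conv_lhs => rw [← hkd]
            ring
    exact Nat.le_of_mul_le_mul_right hstep hd0
  have hmain : Nat.card G ≤ s / d * (i * f ^ 2) := by
    calc Nat.card G = a * (i * f) := hGcard
      _ ≤ s / d * f * (i * f) := Nat.mul_le_mul_right _ hkey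
      _ = s / d * (i * f ^ 2) := by ring
  have hk0 : 0 < s / d := Nat.div_pos (Nat.le_of_dvd hs0 hdvd) hd0
  calc Nat.card G / (s / d) ≤ s / d * (i * f ^ 2) / (s / d) :=
        Nat.div_le_div_right hmain
    _ = i * f ^ 2 := Nat.mul_div_cancel_left _ hk0
end

section
/- For every m ≥ 1 the group S_{2^{m|2}} = ⟨a,b,c | a²=1, b²=c, (ab)² = c^{2^{m−1}+1}, c^{2^m}=[a,c]=[b,c]=1⟩ is isomorphic to D_{2^{1|2}} = ⟨a,b,c | a²=b²=1, (ab)²=c, c²=[a,c]=[b,c]=1⟩ if m = 1, and to Q_{2^{m|2}} = ⟨a,b,c | a²=c, b²=c, (ab)² = c^{2^{m−1}+2}, c^{2^m}=[a,c]=[b,c]=1⟩ if m > 1. -/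
/-!
All three presentations have relations of the shape `a² = c^α`, `b² = c^β`,
`(ab)^(2^(n-1)) = c^γ`, `c^(2^m) = 1` with `c` commuting with `a` and `b`, so an isomorphism is
a pair of generator substitutions respecting these relations and mutually inverse on generators.
For `m = 1`, `b ↦ ab` works in both directions because `a² = 1` on both sides. For `m = k + 2`,
take `a ↦ ab·c^(2^k - 1)` and back `a ↦ ab·c^(3·2^k)`, fixing `b` and `c`: as `b² = c`
commutes with `a` and `b`, `(ab·c^j)·b = a·c^(j+1)`, so each relation becomes a congruence
between exponents of `c` modulo `2^(k+2)`; the two exponents sum to `2^(k+2) - 1`, so both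
composites fix `a`.
-/

namespace MIP

open scoped commutatorElement

def a : FreeGroup (Fin 3) := FreeGroup.of 0
def b : FreeGroup (Fin 3) := FreeGroup.of 1
def c : FreeGroup (Fin 3) := FreeGroup.of 2

/-- Relations of `D_{2^{m|n}}`. -/
def relsD (m n : ℕ) : Set (FreeGroup (Fin 3)) :=
  {a ^ 2, b ^ 2, (a * b) ^ (2 ^ (n - 1)) * (c ^ (2 ^ (m - 1)))⁻¹,
    c ^ (2 ^ m), ⁅a, c⁆, ⁅b, c⁆}

/-- Relations of `Q_{2^{m|n}}`. -/
def relsQ (m n : ℕ) : Set (FreeGroup (Fin 3)) :=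
  {a ^ 2 * c⁻¹, b ^ 2 * c⁻¹, (a * b) ^ (2 ^ (n - 1)) * (c ^ (2 ^ (m - 1) + 2 ^ (n - 1)))⁻¹,
    c ^ (2 ^ m), ⁅a, c⁆, ⁅b, c⁆}

/-- Relations of `S_{2^{m|n}}`. -/
def relsS (m n : ℕ) : Set (FreeGroup (Fin 3)) :=
  {a ^ 2, b ^ 2 * c⁻¹, (a * b) ^ (2 ^ (n - 1)) * (c ^ (2 ^ (m - 1) + 2 ^ (n - 2)))⁻¹,
    c ^ (2 ^ m), ⁅a, c⁆, ⁅b, c⁆}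

section Relations

variable {G : Type*} [Group G]

/-- The presentations `D`, `Q`, `S` are the cases `(α, β, γ) = (0, 0, 2^(m-1))`,
`(1, 1, 2^(m-1) + 2^(n-1))` and `(0, 1, 2^(m-1) + 2^(n-2))`. -/
structure SatisfiesRels (m n α β γ : ℕ) (x y z : G) : Prop where
  sq_fst : x ^ 2 = z ^ α
  sq_snd : y ^ 2 = z ^ β
  mul_pow : (x * y) ^ 2 ^ (n - 1) = z ^ γ
  pow_eq_one : z ^ 2 ^ m = 1
  commute_fst : Commute x z
  commute_snd : Commute y z

def relsFamily (m n α β γ : ℕ) : Set (FreeGroup (Fin 3)) :=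
  {a ^ 2 * (c ^ α)⁻¹, b ^ 2 * (c ^ β)⁻¹, (a * b) ^ 2 ^ (n - 1) * (c ^ γ)⁻¹,
    c ^ 2 ^ m, ⁅a, c⁆, ⁅b, c⁆}

theorem relsD_eq (m n : ℕ) : relsD m n = relsFamily m n 0 0 (2 ^ (m - 1)) := by
  simp [relsD, relsFamily]

theorem relsQ_eq (m n : ℕ) :
    relsQ m n = relsFamily m n 1 1 (2 ^ (m - 1) + 2 ^ (n - 1)) := by
  simp [relsQ, relsFamily]

theorem relsS_eq (m n : ℕ) :
    relsS m n = relsFamily m n 0 1 (2 ^ (m - 1) + 2 ^ (n - 2)) := by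
  simp [relsS, relsFamily]

theorem satisfiesRels_iff_forall_lift_eq_one {m n α β γ : ℕ} {x y z : G} :
    SatisfiesRels m n α β γ x y z ↔
      ∀ r ∈ relsFamily m n α β γ, FreeGroup.lift ![x, y, z] r = 1 := by
  simp only [relsFamily, Set.forall_mem_insert, Set.mem_singleton_iff, forall_eq, a, b, c,
    map_mul, map_pow, map_inv, map_commutatorElement, FreeGroup.lift_apply_of, mul_inv_eq_one,
    commutatorElement_eq_one_iff_commute]
  exact ⟨fun ⟨h₁, h₂, h₃, h₄, h₅, h₆⟩ => ⟨h₁, h₂, h₃, h₄, h₅, h₆⟩,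
    fun ⟨h₁, h₂, h₃, h₄, h₅, h₆⟩ => ⟨h₁, h₂, h₃, h₄, h₅, h₆⟩⟩

end Relations

section Triples

variable {G : Type*} [Group G] {x y z : G}

theorem pow_add_mul_of_pow_eq_one {N : ℕ} (hz : z ^ N = 1) (i t : ℕ) :
    z ^ (i + N * t) = z ^ i := by
  rw [pow_add, pow_mul, hz, one_pow, mul_one]

theorem Commute.mul_pow_sq (hxz : Commute x z) (j : ℕ) :
    (x * z ^ j) ^ 2 = x ^ 2 * z ^ (2 * j) := by
  rw [(hxz.pow_right j).mul_pow, ← pow_mul, mul_comm j]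

theorem mul_mul_pow_mul_of_sq_eq (hy : y ^ 2 = z) (hyz : Commute y z) (x : G) (j : ℕ) :
    x * y * z ^ j * y = x * z ^ (j + 1) := by
  rw [mul_assoc (x * y), ← (hyz.pow_right j).eq, ← mul_assoc, mul_assoc x, ← sq, hy,
    mul_assoc, ← pow_succ']

namespace SatisfiesRels

variable {m n α γ : ℕ}

theorem mul_mul_cancel_left {β : ℕ} (h : SatisfiesRels m n 0 β γ x y z) (w : G) :
    x * (x * w) = w := by
  rw [← mul_assoc, ← sq, h.sq_fst, pow_zero, one_mul]

theorem mul_mul_pow_mul_mul_pow (h : SatisfiesRels m n α 1 γ x y z) {i j : ℕ}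
    (hij : i + 1 + j = 2 ^ m) (w : G) : w * y * z ^ i * y * z ^ j = w := by
  rw [mul_mul_pow_mul_of_sq_eq (h.sq_snd.trans (pow_one z)) h.commute_snd, mul_assoc,
    ← pow_add, hij, h.pow_eq_one, mul_one]

theorem S_of_D (h : SatisfiesRels 1 2 0 0 1 x y z) : SatisfiesRels 1 2 0 1 2 x (x * y) z := by
  have hz : z ^ 2 = 1 := h.pow_eq_one
  refine ⟨h.sq_fst, h.mul_pow, ?_, h.pow_eq_one, h.commute_fst,
    h.commute_fst.mul_left h.commute_snd⟩
  rw [← mul_assoc, ← sq, h.sq_fst, pow_zero, one_mul, hz]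
  exact h.sq_snd.trans (pow_zero z)

theorem D_of_S (h : SatisfiesRels 1 2 0 1 2 x y z) : SatisfiesRels 1 2 0 0 1 x (x * y) z := by
  have hz : z ^ 2 = 1 := h.pow_eq_one
  refine ⟨h.sq_fst, h.mul_pow.trans (hz.trans (pow_zero z).symm), ?_, h.pow_eq_one,
    h.commute_fst, h.commute_fst.mul_left h.commute_snd⟩
  rw [← mul_assoc, ← sq, h.sq_fst, pow_zero, one_mul]
  exact h.sq_snd

theorem S_of_Q {k : ℕ} (h : SatisfiesRels (k + 2) 2 1 1 (2 ^ (k + 1) + 2) x y z) :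
    SatisfiesRels (k + 2) 2 0 1 (2 ^ (k + 1) + 1) (x * y * z ^ (2 ^ k - 1)) y z := by
  have hk : 1 ≤ 2 ^ k := Nat.one_le_two_pow
  have hxy : (x * y) ^ 2 = z ^ (2 ^ (k + 1) + 2) := h.mul_pow
  refine ⟨?_, h.sq_snd, ?_, h.pow_eq_one,
    (h.commute_fst.mul_left h.commute_snd).mul_left ((Commute.refl z).pow_left _),
    h.commute_snd⟩
  · calc (x * y * z ^ (2 ^ k - 1)) ^ 2
        = z ^ 2 ^ (k + 2) := by
          rw [Commute.mul_pow_sq (h.commute_fst.mul_left h.commute_snd), hxy, ← pow_add]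
          congr 1
          rw [pow_succ, pow_succ, pow_succ]
          omega
      _ = z ^ 0 := h.pow_eq_one.trans (pow_zero z).symm
  · calc (x * y * z ^ (2 ^ k - 1) * y) ^ 2
        = (x * z ^ 2 ^ k) ^ 2 := by
          rw [mul_mul_pow_mul_of_sq_eq (h.sq_snd.trans (pow_one z)) h.commute_snd,
            Nat.sub_add_cancel hk]
      _ = z ^ (2 ^ (k + 1) + 1) := by
          rw [Commute.mul_pow_sq h.commute_fst, h.sq_fst, ← pow_add]
          ring_nf

theorem Q_of_S {k : ℕ} (h : SatisfiesRels (k + 2) 2 0 1 (2 ^ (k + 1) + 1) x y z) :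
    SatisfiesRels (k + 2) 2 1 1 (2 ^ (k + 1) + 2) (x * y * z ^ (3 * 2 ^ k)) y z := by
  have hxy : (x * y) ^ 2 = z ^ (2 ^ (k + 1) + 1) := h.mul_pow
  refine ⟨?_, h.sq_snd, ?_, h.pow_eq_one,
    (h.commute_fst.mul_left h.commute_snd).mul_left ((Commute.refl z).pow_left _),
    h.commute_snd⟩
  · calc (x * y * z ^ (3 * 2 ^ k)) ^ 2
        = z ^ (1 + 2 ^ (k + 2) * 2) := by
          rw [Commute.mul_pow_sq (h.commute_fst.mul_left h.commute_snd), hxy, ← pow_add]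
          ring_nf
      _ = z ^ 1 := pow_add_mul_of_pow_eq_one h.pow_eq_one 1 2
  · calc (x * y * z ^ (3 * 2 ^ k) * y) ^ 2
        = (x * z ^ (3 * 2 ^ k + 1)) ^ 2 := by
          rw [mul_mul_pow_mul_of_sq_eq (h.sq_snd.trans (pow_one z)) h.commute_snd]
      _ = z ^ (2 ^ (k + 1) + 2 + 2 ^ (k + 2) * 1) := by
          rw [Commute.mul_pow_sq h.commute_fst, h.sq_fst, pow_zero, one_mul]
          ring_nf
      _ = z ^ (2 ^ (k + 1) + 2) := pow_add_mul_of_pow_eq_one h.pow_eq_one _ 1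

end SatisfiesRels

end Triples

section Presented

variable {m n α β γ : ℕ} {rels : Set (FreeGroup (Fin 3))}

theorem lift_of_eq_mk : FreeGroup.lift ![(PresentedGroup.of 0 : PresentedGroup rels),
    PresentedGroup.of 1, PresentedGroup.of 2] = PresentedGroup.mk rels := by
  ext i
  fin_cases i <;> rfl

theorem satisfiesRels_of (hrels : rels = relsFamily m n α β γ) :
    SatisfiesRels m n α β γ (PresentedGroup.of 0 : PresentedGroup rels)
      (PresentedGroup.of 1) (PresentedGroup.of 2) :=
  satisfiesRels_iff_forall_lift_eq_one.mpr fun r hr => by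
    rw [lift_of_eq_mk]
    exact PresentedGroup.one_of_mem (hrels ▸ hr)

variable {G : Type*} [Group G] {x y z : G}

def SatisfiesRels.toGroup (h : SatisfiesRels m n α β γ x y z)
    (hrels : rels = relsFamily m n α β γ) : PresentedGroup rels →* G :=
  PresentedGroup.toGroup (hrels ▸ satisfiesRels_iff_forall_lift_eq_one.mp h)

@[simp]
theorem SatisfiesRels.toGroup_of (h : SatisfiesRels m n α β γ x y z)
    (hrels : rels = relsFamily m n α β γ) (i : Fin 3) :
    h.toGroup hrels (PresentedGroup.of i) = ![x, y, z] i :=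
  PresentedGroup.toGroup.of _

end Presented

def presentedSEquivD : PresentedGroup (relsS 1 2) ≃* PresentedGroup (relsD 1 2) :=
  have hS := satisfiesRels_of (relsS_eq 1 2)
  have hD := satisfiesRels_of (relsD_eq 1 2)
  MonoidHom.toMulEquiv (hD.S_of_D.toGroup (relsS_eq 1 2)) (hS.D_of_S.toGroup (relsD_eq 1 2))
    (PresentedGroup.ext fun i => by fin_cases i <;> simp [hS.mul_mul_cancel_left])
    (PresentedGroup.ext fun i => by fin_cases i <;> simp [hD.mul_mul_cancel_left])

def presentedSEquivQ (k : ℕ) :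
    PresentedGroup (relsS (k + 2) 2) ≃* PresentedGroup (relsQ (k + 2) 2) :=
  have hS := satisfiesRels_of (relsS_eq (k + 2) 2)
  have hQ := satisfiesRels_of (relsQ_eq (k + 2) 2)
  have h4 : 2 ^ (k + 2) = 4 * 2 ^ k := by ring
  have h1 : 1 ≤ 2 ^ k := Nat.one_le_two_pow
  have hSQ := hS.mul_mul_pow_mul_mul_pow (i := 3 * 2 ^ k) (j := 2 ^ k - 1) (by omega)
  have hQS := hQ.mul_mul_pow_mul_mul_pow (i := 2 ^ k - 1) (j := 3 * 2 ^ k) (by omega)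
  MonoidHom.toMulEquiv (hQ.S_of_Q.toGroup (relsS_eq (k + 2) 2))
    (hS.Q_of_S.toGroup (relsQ_eq (k + 2) 2))
    (PresentedGroup.ext fun i => by fin_cases i <;> simp [hSQ])
    (PresentedGroup.ext fun i => by fin_cases i <;> simp [hQS])

theorem exceptional_isomorphisms_n_two_general (m : ℕ) :
    (m = 1 → Nonempty (PresentedGroup (relsS m 2) ≃* PresentedGroup (relsD 1 2))) ∧
      (1 < m → Nonempty (PresentedGroup (relsS m 2) ≃* PresentedGroup (relsQ m 2))) := by
  refine ⟨?_, fun hm => ?_⟩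
  · rintro rfl
    exact ⟨presentedSEquivD⟩
  · obtain ⟨k, rfl⟩ : ∃ k, m = k + 2 := ⟨m - 2, by omega⟩
    exact ⟨presentedSEquivQ k⟩

theorem exceptional_isomorphisms_n_two (m : ℕ) (hm : 1 ≤ m) :
    (m = 1 → Nonempty (PresentedGroup (relsS m 2) ≃* PresentedGroup (relsD 1 2))) ∧
      (1 < m → Nonempty (PresentedGroup (relsS m 2) ≃* PresentedGroup (relsQ m 2))) :=
  exceptional_isomorphisms_n_two_general m

end MIP
end
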